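/- Let 0 < a < b and let n ∈ ℤ with |n| ≥ 2. For λ, μ ∈ [0,∞) with λ + μ > 0 and q ≥ 1, set γ₁ = (1/6)[2λ³/(λ+μ)² + 2μ − λ], γ₂ = (λ²+μ²)/(2(λ+μ)) − γ₁, γ₃ = (1/6)[2μ³/(λ+μ)² + 2λ − μ], γ₄ = (λ²+μ²)/(2(λ+μ)) − γ₃. Then |A_{λ/(λ+μ)}(aⁿ, bⁿ) − Lₙⁿ(a,b)| ≤ ((b−a)/(λ+μ)) · ((λ²+μ²)/(2(λ+μ)))^{(q−1)/q} · |n| · min{ (γ₁ b^{q(n−1)} + γ₂ a^{q(n−1)})^{1/q}, (γ₃ a^{q(n−1)} + γ₄ b^{q(n−1)})^{1/q} }. -/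

import Mathlib

/-!
Integration by parts gives, for `c ∈ [0, 1]`,
`c f(a) + (1 - c) f(b) - (1/(b-a)) ∫ₐᵇ f = (b - a) ∫₀¹ (t - c) f'(a + t(b - a)) dt`.
Hölder's inequality with weight `|t - c|` and then convexity of `|f'|^q` along the segment bound
the right side by the moments `∫₀¹ |t - c|`, `∫₀¹ |t - c| t`, `∫₀¹ |t - c| (1 - t)`, which are
explicit cubics in `c`. For `f(x) = xⁿ` on `(0, ∞)`, `|f'|^q = |n|^q (x^(n-1))^q` is convex because
`x ↦ x^(n-1)` is convex and `y ↦ y^q` is convex and increasing. With `c = λ/(λ+μ)` the moments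
become the `γᵢ/(λ+μ)`; exchanging `a` and `b` (so `c ↦ 1 - c`) gives the second term of the `min`.
-/

open MeasureTheory Set intervalIntegral

lemma integral_abs_sub_mul_eq {c : ℝ} (hc0 : 0 ≤ c) (hc1 : c ≤ 1) {g : ℝ → ℝ}
    (hg : Continuous g) :
    ∫ t in (0 : ℝ)..1, |t - c| * g t
      = (∫ t in (0 : ℝ)..c, (c * g t - t * g t)) + ∫ t in c..1, (t * g t - c * g t) := by
  have hint : ∀ x y : ℝ, IntervalIntegrable (fun t => |t - c| * g t) volume x y := fun x y =>
    (by fun_prop : Continuous fun t => |t - c| * g t).intervalIntegrable x y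
  rw [← integral_add_adjacent_intervals (hint 0 c) (hint c 1)]
  congr 1 <;> refine integral_congr fun t ht => ?_
  · rw [uIcc_of_le hc0] at ht
    rw [abs_of_nonpos (by linarith [ht.2])]
    ring
  · rw [uIcc_of_le hc1] at ht
    rw [abs_of_nonneg (by linarith [ht.1])]
    ring

lemma integral_abs_sub {c : ℝ} (hc0 : 0 ≤ c) (hc1 : c ≤ 1) :
    ∫ t in (0 : ℝ)..1, |t - c| = c ^ 2 - c + 1 / 2 := by
  have h := integral_abs_sub_mul_eq hc0 hc1 continuous_const (g := fun _ => (1 : ℝ))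
  simp only [mul_one] at h
  rw [h, intervalIntegral.integral_sub intervalIntegrable_const intervalIntegrable_id,
    intervalIntegral.integral_sub intervalIntegrable_id intervalIntegrable_const]
  simp only [intervalIntegral.integral_const, integral_id, smul_eq_mul]
  ring

lemma integral_abs_sub_mul_self {c : ℝ} (hc0 : 0 ≤ c) (hc1 : c ≤ 1) :
    ∫ t in (0 : ℝ)..1, |t - c| * t = c ^ 3 / 3 - c / 2 + 1 / 3 := by
  rw [integral_abs_sub_mul_eq hc0 hc1 (g := fun t => t) continuous_id,
    intervalIntegral.integral_sub, intervalIntegral.integral_sub,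
    intervalIntegral.integral_const_mul, intervalIntegral.integral_const_mul]
  · simp only [← pow_two, integral_id, integral_pow]
    ring
  all_goals exact Continuous.intervalIntegrable (by fun_prop) _ _

/-- The two cubics are `∫₀¹ |t - c| (1 - t) dt` and `∫₀¹ |t - c| t dt`. -/
lemma abs_sub_moment_weights_nonneg {c : ℝ} (hc0 : 0 ≤ c) (hc1 : c ≤ 1) :
    0 ≤ -c ^ 3 / 3 + c ^ 2 - c / 2 + 1 / 6 ∧ 0 ≤ c ^ 3 / 3 - c / 2 + 1 / 3 := by
  constructor <;> nlinarith [mul_nonneg hc0 (sub_nonneg.2 hc1), mul_nonneg hc0 hc0]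

lemma memLp_restrict_Ioc_of_continuousOn {f : ℝ → ℝ} {α β : ℝ} (hf : ContinuousOn f (Icc α β))
    (p : ENNReal) : MemLp f p (volume.restrict (Ioc α β)) := by
  obtain ⟨C, hC⟩ := isCompact_Icc.exists_bound_of_continuousOn hf
  refine MemLp.of_bound ((hf.mono Ioc_subset_Icc_self).aestronglyMeasurable measurableSet_Ioc) C ?_
  filter_upwards [ae_restrict_mem measurableSet_Ioc] with t ht
  exact hC t (Ioc_subset_Icc_self ht)

lemma integral_mul_le_integral_mul_rpow {w g : ℝ → ℝ} {α β q : ℝ} (hαβ : α ≤ β) (hq : 1 ≤ q)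
    (hw : ContinuousOn w (Icc α β)) (hg : ContinuousOn g (Icc α β))
    (hw0 : ∀ t ∈ Icc α β, 0 ≤ w t) (hg0 : ∀ t ∈ Icc α β, 0 ≤ g t) :
    ∫ t in α..β, w t * g t
      ≤ (∫ t in α..β, w t) ^ ((q - 1) / q) * (∫ t in α..β, w t * g t ^ q) ^ (1 / q) := by
  rcases hq.eq_or_lt with rfl | hq1
  · simp
  have hq0 : 0 < q := by linarith
  have hpq : (q / (q - 1)).HolderConjugate q := by
    rw [Real.holderConjugate_iff]
    exact ⟨by rw [lt_div_iff₀ (by linarith)]; linarith, by field_simp; ring⟩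
  have hw0' : ∀ t ∈ Ioc α β, 0 ≤ w t := fun t ht => hw0 t (Ioc_subset_Icc_self ht)
  have hg0' : ∀ t ∈ Ioc α β, 0 ≤ g t := fun t ht => hg0 t (Ioc_subset_Icc_self ht)
  have holder := integral_mul_le_Lp_mul_Lq_of_nonneg hpq
    (f := fun t => w t ^ ((q - 1) / q)) (g := fun t => w t ^ (1 / q) * g t)
    (ae_restrict_of_forall_mem measurableSet_Ioc fun t ht => Real.rpow_nonneg (hw0' t ht) _)
    (ae_restrict_of_forall_mem measurableSet_Ioc fun t ht =>
      mul_nonneg (Real.rpow_nonneg (hw0' t ht) _) (hg0' t ht))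
    (memLp_restrict_Ioc_of_continuousOn (hw.rpow_const fun _ _ => Or.inr (by positivity)) _)
    (memLp_restrict_Ioc_of_continuousOn
      ((hw.rpow_const fun _ _ => Or.inr (by positivity)).mul hg) _)
  have e_prod : ∫ t in Ioc α β, w t ^ ((q - 1) / q) * (w t ^ (1 / q) * g t)
      = ∫ t in Ioc α β, w t * g t := by
    refine setIntegral_congr_fun measurableSet_Ioc fun t ht => ?_
    rw [← mul_assoc, ← Real.rpow_add_of_nonneg (hw0' t ht) (by positivity) (by positivity),
      ← add_div, sub_add_cancel, div_self hq0.ne', Real.rpow_one]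
  have e_left : ∫ t in Ioc α β, (w t ^ ((q - 1) / q)) ^ (q / (q - 1)) = ∫ t in Ioc α β, w t := by
    refine setIntegral_congr_fun measurableSet_Ioc fun t ht => ?_
    rw [← Real.rpow_mul (hw0' t ht), div_mul_div_cancel₀' (sub_ne_zero.2 hq1.ne'), div_self hq0.ne',
      Real.rpow_one]
  have e_right : ∫ t in Ioc α β, (w t ^ (1 / q) * g t) ^ q = ∫ t in Ioc α β, w t * g t ^ q := by
    refine setIntegral_congr_fun measurableSet_Ioc fun t ht => ?_
    rw [Real.mul_rpow (Real.rpow_nonneg (hw0' t ht) _) (hg0' t ht),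
      ← Real.rpow_mul (hw0' t ht), one_div_mul_cancel hq0.ne', Real.rpow_one]
  rw [e_prod, e_left, e_right, one_div_div] at holder
  simpa only [integral_of_le hαβ] using holder

lemma add_mul_sub_mem_uIcc {a b t : ℝ} (ht : t ∈ Icc (0 : ℝ) 1) : a + t * (b - a) ∈ uIcc a b :=
  (convex_uIcc a b).add_smul_sub_mem left_mem_uIcc right_mem_uIcc ht

theorem weighted_mean_sub_average_eq {f f' : ℝ → ℝ} {a b : ℝ} (c : ℝ) (hab : a ≠ b)
    (hf : ∀ x ∈ uIcc a b, HasDerivAt f (f' x) x) (hf' : ContinuousOn f' (uIcc a b)) :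
    c * f a + (1 - c) * f b - (∫ x in a..b, f x) / (b - a)
      = (b - a) * ∫ t in (0 : ℝ)..1, (t - c) * f' (a + t * (b - a)) := by
  have hmem : ∀ t ∈ uIcc (0 : ℝ) 1, a + t * (b - a) ∈ uIcc a b := fun t ht =>
    add_mul_sub_mem_uIcc (by rwa [uIcc_of_le zero_le_one] at ht)
  have hline : ∀ t : ℝ, HasDerivAt (fun t => a + t * (b - a)) (b - a) t := fun t => by
    simpa using ((hasDerivAt_id t).mul_const (b - a)).const_add a
  have parts := integral_mul_deriv_eq_deriv_mul (a := 0) (b := 1)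
    (u := fun t => t - c) (v := fun t => f (a + t * (b - a)))
    (u' := fun _ => 1) (v' := fun t => f' (a + t * (b - a)) * (b - a))
    (fun t _ => (hasDerivAt_id t).sub_const c)
    (fun t ht => (hf _ (hmem t ht)).comp t (hline t))
    intervalIntegrable_const
    ((hf'.comp (by fun_prop) (fun t ht => hmem t ht)).mul continuousOn_const).intervalIntegrable
  have hsub : ∫ t in (0 : ℝ)..1, f (a + t * (b - a)) = (∫ x in a..b, f x) / (b - a) := by
    simp only [add_comm a, mul_comm _ (b - a)]
    rw [integral_comp_mul_add _ (sub_ne_zero.2 hab.symm)]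
    simp [div_eq_inv_mul]
  simp only [one_mul, zero_mul, add_zero, add_sub_cancel, hsub] at parts
  rw [← intervalIntegral.integral_const_mul]
  simp only [mul_left_comm (b - a), mul_comm _ (b - a)] at parts ⊢
  rw [parts]
  ring

lemma integral_abs_sub_mul_le_of_convexOn {φ : ℝ → ℝ} {a b c : ℝ} (hc0 : 0 ≤ c) (hc1 : c ≤ 1)
    (hφ : ContinuousOn φ (uIcc a b)) (hconv : ConvexOn ℝ (uIcc a b) φ) :
    ∫ t in (0 : ℝ)..1, |t - c| * φ (a + t * (b - a))
      ≤ (-c ^ 3 / 3 + c ^ 2 - c / 2 + 1 / 6) * φ a + (c ^ 3 / 3 - c / 2 + 1 / 3) * φ b := by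
  have hpoint : ∀ t ∈ Icc (0 : ℝ) 1,
      |t - c| * φ (a + t * (b - a)) ≤ |t - c| * ((1 - t) * φ a + t * φ b) := by
    intro t ht
    refine mul_le_mul_of_nonneg_left ?_ (abs_nonneg _)
    have h := hconv.2 left_mem_uIcc right_mem_uIcc (sub_nonneg.2 ht.2) ht.1 (by ring)
    simp only [smul_eq_mul] at h
    convert h using 2
    ring
  have hint : ∀ g : ℝ → ℝ, Continuous g → IntervalIntegrable g volume 0 1 :=
    fun g hg => hg.intervalIntegrable 0 1
  refine (integral_mono_on zero_le_one ?_ (hint _ (by fun_prop)) hpoint).trans_eq ?_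
  · exact ((by fun_prop : Continuous fun t => |t - c|).continuousOn.mul
      (hφ.comp (by fun_prop) fun t ht => add_mul_sub_mem_uIcc ht)).intervalIntegrable_of_Icc
      zero_le_one
  have hsplit : ∀ t : ℝ, |t - c| * ((1 - t) * φ a + t * φ b)
      = φ a * |t - c| + (φ b - φ a) * (|t - c| * t) := fun t => by ring
  simp only [hsplit]
  rw [intervalIntegral.integral_add (hint _ (by fun_prop)) (hint _ (by fun_prop)),
    intervalIntegral.integral_const_mul, intervalIntegral.integral_const_mul,
    integral_abs_sub hc0 hc1, integral_abs_sub_mul_self hc0 hc1]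
  ring

theorem abs_weighted_mean_sub_average_le {f f' : ℝ → ℝ} {a b c q : ℝ} (hab : a ≠ b)
    (hc0 : 0 ≤ c) (hc1 : c ≤ 1) (hq : 1 ≤ q)
    (hf : ∀ x ∈ uIcc a b, HasDerivAt f (f' x) x) (hf' : ContinuousOn f' (uIcc a b))
    (hconv : ConvexOn ℝ (uIcc a b) fun x => |f' x| ^ q) :
    |c * f a + (1 - c) * f b - (∫ x in a..b, f x) / (b - a)|
      ≤ |b - a| * (c ^ 2 - c + 1 / 2) ^ ((q - 1) / q) *
        ((-c ^ 3 / 3 + c ^ 2 - c / 2 + 1 / 6) * |f' a| ^ q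
          + (c ^ 3 / 3 - c / 2 + 1 / 3) * |f' b| ^ q) ^ (1 / q) := by
  have hq0 : 0 < q := by linarith
  have hderiv : ContinuousOn (fun t => |f' (a + t * (b - a))|) (Icc 0 1) :=
    (hf'.comp (by fun_prop) fun t ht => add_mul_sub_mem_uIcc ht).abs
  rw [weighted_mean_sub_average_eq c hab hf hf', abs_mul, mul_assoc]
  gcongr
  calc |∫ t in (0 : ℝ)..1, (t - c) * f' (a + t * (b - a))|
      ≤ ∫ t in (0 : ℝ)..1, |t - c| * |f' (a + t * (b - a))| := by
        simpa only [abs_mul] using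
          abs_integral_le_integral_abs (f := fun t => (t - c) * f' (a + t * (b - a))) zero_le_one
    _ ≤ (∫ t in (0 : ℝ)..1, |t - c|) ^ ((q - 1) / q) *
          (∫ t in (0 : ℝ)..1, |t - c| * |f' (a + t * (b - a))| ^ q) ^ (1 / q) :=
        integral_mul_le_integral_mul_rpow zero_le_one hq (by fun_prop) hderiv
          (fun _ _ => abs_nonneg _) (fun _ _ => abs_nonneg _)
    _ ≤ _ := by
        rw [integral_abs_sub hc0 hc1]
        gcongr
        · exact Real.rpow_nonneg (by nlinarith [sq_nonneg (c - 1 / 2)]) _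
        · exact intervalIntegral.integral_nonneg zero_le_one fun t _ => by positivity
        · exact integral_abs_sub_mul_le_of_convexOn hc0 hc1
            ((hf'.abs).rpow_const fun _ _ => Or.inr hq0.le) hconv

lemma convexOn_zpow_rpow {q : ℝ} (hq : 1 ≤ q) (m : ℤ) :
    ConvexOn ℝ (Ioi 0) fun x : ℝ => (x ^ m) ^ q := by
  refine ⟨convex_Ioi 0, fun x hx y hy s t hs ht hst => ?_⟩
  have hxm : 0 ≤ x ^ m := zpow_nonneg (le_of_lt hx) m
  have hym : 0 ≤ y ^ m := zpow_nonneg (le_of_lt hy) m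
  calc ((s • x + t • y) ^ m) ^ q ≤ (s • x ^ m + t • y ^ m) ^ q :=
        Real.rpow_le_rpow (zpow_nonneg (mem_Ioi.1 (convex_Ioi 0 hx hy hs ht hst)).le m)
          ((convexOn_zpow m).2 hx hy hs ht hst) (by linarith)
    _ ≤ s • (x ^ m) ^ q + t • (y ^ m) ^ q := (convexOn_rpow hq).2 hxm hym hs ht hst

lemma abs_intCast_mul_zpow_rpow {x : ℝ} (hx : 0 < x) (q : ℝ) (n m : ℤ) :
    |(n : ℝ) * x ^ m| ^ q = |(n : ℝ)| ^ q * (x ^ m) ^ q := by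
  rw [abs_mul, abs_of_pos (zpow_pos hx _), Real.mul_rpow (abs_nonneg _) (zpow_pos hx _).le]

lemma zpow_sub_one_rpow {x : ℝ} (hx : 0 < x) (q : ℝ) (n : ℤ) :
    (x ^ (n - 1)) ^ q = x ^ (q * ((n : ℝ) - 1)) := by
  rw [mul_comm q, Real.rpow_mul hx.le, ← Real.rpow_intCast]
  push_cast
  rfl

theorem abs_weighted_mean_zpow_sub_le {a b c q : ℝ} (ha : 0 < a) (hb : 0 < b) (hab : a ≠ b)
    (hc0 : 0 ≤ c) (hc1 : c ≤ 1) (hq : 1 ≤ q) {n : ℤ} (hn : n ≠ -1) :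
    |c * a ^ n + (1 - c) * b ^ n - (b ^ (n + 1) - a ^ (n + 1)) / (((n : ℝ) + 1) * (b - a))|
      ≤ |b - a| * |(n : ℝ)| * (c ^ 2 - c + 1 / 2) ^ ((q - 1) / q) *
        ((-c ^ 3 / 3 + c ^ 2 - c / 2 + 1 / 6) * a ^ (q * ((n : ℝ) - 1))
          + (c ^ 3 / 3 - c / 2 + 1 / 3) * b ^ (q * ((n : ℝ) - 1))) ^ (1 / q) := by
  have hq0 : 0 < q := by linarith
  have hpos : uIcc a b ⊆ Ioi 0 := fun x hx => lt_of_lt_of_le (lt_min ha hb) hx.1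
  have hconv : ConvexOn ℝ (uIcc a b) fun x => |(n : ℝ) * x ^ (n - 1)| ^ q :=
    (((convexOn_zpow_rpow hq (n - 1)).smul (by positivity : 0 ≤ |(n : ℝ)| ^ q)).subset
      hpos (convex_uIcc a b)).congr fun x hx => (abs_intCast_mul_zpow_rpow (hpos hx) q n _).symm
  have key := abs_weighted_mean_sub_average_le (f := fun x => x ^ n) hab hc0 hc1 hq
    (fun x hx => hasDerivAt_zpow n x (Or.inl (hpos hx).ne'))
    (continuousOn_const.mul (continuousOn_zpow₀ _ |>.mono fun x hx => (hpos hx).ne')) hconv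
  rw [integral_zpow (Or.inr ⟨hn, fun h0 => lt_irrefl (0 : ℝ) (hpos h0)⟩),
    abs_intCast_mul_zpow_rpow ha, abs_intCast_mul_zpow_rpow hb, zpow_sub_one_rpow ha,
    zpow_sub_one_rpow hb, div_div] at key
  refine key.trans_eq ?_
  obtain ⟨hw0, hw1⟩ := abs_sub_moment_weights_nonneg hc0 hc1
  rw [mul_left_comm _ (|(n : ℝ)| ^ q), mul_left_comm _ (|(n : ℝ)| ^ q), ← mul_add,
    Real.mul_rpow (by positivity) (by positivity), ← Real.rpow_mul (abs_nonneg _),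
    mul_one_div_cancel hq0.ne', Real.rpow_one]
  ring

lemma mul_rpow_mul_mul_rpow {L X W q : ℝ} (hL : 0 < L) (hX : 0 ≤ X) (hW : 0 ≤ W) (hq : q ≠ 0) :
    (L * X) ^ ((q - 1) / q) * (L * W) ^ (1 / q) = L * (X ^ ((q - 1) / q) * W ^ (1 / q)) := by
  rw [Real.mul_rpow hL.le hX, Real.mul_rpow hL.le hW, mul_mul_mul_comm, ← Real.rpow_add hL,
    ← add_div, sub_add_cancel, div_self hq, Real.rpow_one]

theorem abs_weighted_mean_zpow_sub_le_of_weights {a b q lam mu : ℝ} (ha : 0 < a) (hb : 0 < b)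
    (hab : a ≠ b) (hlam : 0 ≤ lam) (hmu : 0 ≤ mu) (hlm : 0 < lam + mu) (hq : 1 ≤ q) {n : ℤ}
    (hn : n ≠ -1) :
    |lam / (lam + mu) * a ^ n + mu / (lam + mu) * b ^ n
        - (b ^ (n + 1) - a ^ (n + 1)) / (((n : ℝ) + 1) * (b - a))|
      ≤ |b - a| / (lam + mu) * ((lam ^ 2 + mu ^ 2) / (2 * (lam + mu))) ^ ((q - 1) / q) *
        |(n : ℝ)| *
        ((1 / 6) * (2 * lam ^ 3 / (lam + mu) ^ 2 + 2 * mu - lam) * b ^ (q * ((n : ℝ) - 1))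
          + ((lam ^ 2 + mu ^ 2) / (2 * (lam + mu))
            - (1 / 6) * (2 * lam ^ 3 / (lam + mu) ^ 2 + 2 * mu - lam))
            * a ^ (q * ((n : ℝ) - 1))) ^ (1 / q) := by
  set c := lam / (lam + mu)
  have hc1 : c ≤ 1 := (div_le_one hlm).2 (by linarith)
  have hmu_c : mu / (lam + mu) = 1 - c := by simp only [c]; field_simp; ring
  have hK : (lam ^ 2 + mu ^ 2) / (2 * (lam + mu)) = (lam + mu) * (c ^ 2 - c + 1 / 2) := by
    simp only [c]; field_simp; ring
  have hT : (1 / 6) * (2 * lam ^ 3 / (lam + mu) ^ 2 + 2 * mu - lam) * b ^ (q * ((n : ℝ) - 1))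
          + ((lam ^ 2 + mu ^ 2) / (2 * (lam + mu))
            - (1 / 6) * (2 * lam ^ 3 / (lam + mu) ^ 2 + 2 * mu - lam)) * a ^ (q * ((n : ℝ) - 1))
        = (lam + mu) * ((-c ^ 3 / 3 + c ^ 2 - c / 2 + 1 / 6) * a ^ (q * ((n : ℝ) - 1))
          + (c ^ 3 / 3 - c / 2 + 1 / 3) * b ^ (q * ((n : ℝ) - 1))) := by
    simp only [c]; field_simp; ring
  have hc0 : 0 ≤ c := by positivity
  obtain ⟨hw0, hw1⟩ := abs_sub_moment_weights_nonneg hc0 hc1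
  rw [hmu_c, hT, mul_right_comm _ _ |(n : ℝ)|, mul_assoc _ _ (_ ^ (1 / q)), hK,
    mul_rpow_mul_mul_rpow hlm (by nlinarith) (by positivity) (by positivity)]
  refine (abs_weighted_mean_zpow_sub_le ha hb hab hc0 hc1 hq hn).trans_eq ?_
  field_simp

/-- Proposition 3.1 of the paper: application to special means, where
`A_{λ/(λ+μ)}(aⁿ, bⁿ) = (λ/(λ+μ)) aⁿ + (μ/(λ+μ)) bⁿ` and
`Lₙⁿ(a,b) = (b^{n+1} - a^{n+1})/((n+1)(b-a))`. -/
theorem stmt_10 (a b : ℝ) (ha : 0 < a) (hab : a < b)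
    (n : ℤ) (hn : 2 ≤ |n|)
    (lam mu : ℝ) (hlam : 0 ≤ lam) (hmu : 0 ≤ mu) (hlm : 0 < lam + mu)
    (q : ℝ) (hq : 1 ≤ q)
    (γ1 γ2 γ3 γ4 : ℝ)
    (hγ1 : γ1 = (1 / 6) * (2 * lam ^ 3 / (lam + mu) ^ 2 + 2 * mu - lam))
    (hγ2 : γ2 = (lam ^ 2 + mu ^ 2) / (2 * (lam + mu)) - γ1)
    (hγ3 : γ3 = (1 / 6) * (2 * mu ^ 3 / (lam + mu) ^ 2 + 2 * lam - mu))
    (hγ4 : γ4 = (lam ^ 2 + mu ^ 2) / (2 * (lam + mu)) - γ3) :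
    |(lam / (lam + mu)) * a ^ n + (mu / (lam + mu)) * b ^ n -
        (b ^ (n + 1) - a ^ (n + 1)) / (((n : ℝ) + 1) * (b - a))| ≤
      ((b - a) / (lam + mu)) * ((lam ^ 2 + mu ^ 2) / (2 * (lam + mu))) ^ ((q - 1) / q) *
        |(n : ℝ)| *
        min ((γ1 * b ^ (q * ((n : ℝ) - 1)) + γ2 * a ^ (q * ((n : ℝ) - 1))) ^ (1 / q))
            ((γ3 * a ^ (q * ((n : ℝ) - 1)) + γ4 * b ^ (q * ((n : ℝ) - 1))) ^ (1 / q)) := by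
  subst hγ1 hγ2 hγ3 hγ4
  have hb := ha.trans hab
  have hn1 : n ≠ -1 := by rintro rfl; norm_num at hn
  have h1 := abs_weighted_mean_zpow_sub_le_of_weights ha hb hab.ne hlam hmu hlm hq hn1
  have h2 := abs_weighted_mean_zpow_sub_le_of_weights hb ha hab.ne' hmu hlam (by linarith) hq hn1
  have hsymm : (a ^ (n + 1) - b ^ (n + 1)) / (((n : ℝ) + 1) * (a - b))
      = (b ^ (n + 1) - a ^ (n + 1)) / (((n : ℝ) + 1) * (b - a)) := by
    rw [← neg_sub b a, ← neg_sub (b ^ (n + 1)), mul_neg, neg_div_neg_eq]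
  rw [abs_of_pos (sub_pos.2 hab)] at h1
  rw [abs_sub_comm a b, abs_of_pos (sub_pos.2 hab), hsymm, add_comm mu lam, add_comm (mu ^ 2),
    add_comm (mu / _ * _)] at h2
  rw [mul_min_of_nonneg _ _ (by positivity)]
  exact le_min h1 h2
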